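/- arXiv:1811.07606 — 2 statements merged into one kernel-verified Lean document; each statement's English description precedes it below -/
import Mathlib

section
/- Let X be a topological space and Y ⊆ X. Then Y is B₁*-embedded in X if and only if every pair of subsets of Y that are completely separated in Y by B₁(Y) are also completely separated in X by B₁(X). -/
/-- A function between topological spaces is *Baire one* if it is the pointwise
limit of a sequence of continuous functions. -/
def IsBaireOne {X Y : Type*} [TopologicalSpace X] [TopologicalSpace Y] (f : X → Y) : Prop :=
  ∃ F : ℕ → X → Y, (∀ n, Continuous (F n)) ∧
    ∀ x, Filter.Tendsto (fun n => F n x) Filter.atTop (nhds (f x))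

/-- Two subsets `A`, `B` of `S` are *completely separated by `B₁(S)`* if there is a
Baire one function `h : S → ℝ` with `0 ≤ h ≤ 1`, `h = 0` on `A` and `h = 1` on `B`. -/
def CompletelySeparatedB1 {S : Type*} [TopologicalSpace S] (A B : Set S) : Prop :=
  ∃ h : S → ℝ, IsBaireOne h ∧ (∀ x, 0 ≤ h x ∧ h x ≤ 1) ∧
    (∀ x ∈ A, h x = 0) ∧ (∀ x ∈ B, h x = 1)

/-- `Y` is *B₁*-embedded* in `X` if every bounded Baire one function on the subspace `Y`
extends to a bounded Baire one function on `X`. -/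
def B1StarEmbedded {X : Type*} [TopologicalSpace X] (Y : Set X) : Prop :=
  ∀ f : Y → ℝ, IsBaireOne f → (∃ M : ℝ, ∀ y : Y, |f y| ≤ M) →
    ∃ g : X → ℝ, IsBaireOne g ∧ (∃ M : ℝ, ∀ x : X, |g x| ≤ M) ∧ ∀ y : Y, g y = f y

/-!
If `Y` is B₁*-embedded, extend a separating function of `A, B ⊆ Y` and clamp it to `[0, 1]`.
Conversely, run the proof of Tietze's extension theorem with Baire one functions: for
`|φ| ≤ 3c` on `Y`, the sets `{φ ≤ -c}` and `{φ ≥ c}` are completely separated in `Y`, hence in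
`X`, by some `k`, and `g = c (2k - 1)` satisfies `|g| ≤ c` and `|φ - g| ≤ 2c` on `Y`. Iterating
on the remainders writes a bounded Baire one `f` on `Y` as a series `∑ gₙ` with `|gₙ| ≤ c (2/3)ⁿ`,
and a uniformly summable series of Baire one functions is Baire one by dominated convergence.
-/

open Filter Topology Set

section

variable {X S : Type*} [TopologicalSpace X] [TopologicalSpace S]

theorem Continuous.comp_isBaireOne {Z W : Type*} [TopologicalSpace Z] [TopologicalSpace W]
    {φ : Z → W} (hφ : Continuous φ) {f : S → Z} (hf : IsBaireOne f) : IsBaireOne (φ ∘ f) := by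
  obtain ⟨F, hFc, hF⟩ := hf
  exact ⟨fun n => φ ∘ F n, fun n => hφ.comp (hFc n), fun x => (hφ.tendsto _).comp (hF x)⟩

theorem IsBaireOne.comp_continuous {Z : Type*} [TopologicalSpace Z] {f : S → Z}
    (hf : IsBaireOne f) {e : X → S} (he : Continuous e) : IsBaireOne (f ∘ e) := by
  obtain ⟨F, hFc, hF⟩ := hf
  exact ⟨fun n => F n ∘ e, fun n => (hFc n).comp he, fun x => hF (e x)⟩

theorem IsBaireOne.sub {G : Type*} [TopologicalSpace G] [Sub G] [ContinuousSub G]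
    {f g : S → G} (hf : IsBaireOne f) (hg : IsBaireOne g) : IsBaireOne (f - g) := by
  obtain ⟨F, hFc, hF⟩ := hf
  obtain ⟨G, hGc, hG⟩ := hg
  exact ⟨fun n => F n - G n, fun n => (hFc n).sub (hGc n), fun x => (hF x).sub (hG x)⟩

theorem IsBaireOne.exists_approx_abs_le {f : S → ℝ} (hf : IsBaireOne f) {r : ℝ}
    (hr : ∀ x, |f x| ≤ r) :
    ∃ F : ℕ → S → ℝ, (∀ n, Continuous (F n)) ∧ (∀ n x, |F n x| ≤ r) ∧
      ∀ x, Tendsto (fun n => F n x) atTop (𝓝 (f x)) := by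
  obtain ⟨F, hFc, hF⟩ := hf
  set clamp : ℝ → ℝ := fun t => max (-r) (min r t)
  have hclamp : Continuous clamp := by fun_prop
  refine ⟨fun n => clamp ∘ F n, fun n => hclamp.comp (hFc n), fun n x => ?_, fun x => ?_⟩
  · have : 0 ≤ r := (abs_nonneg _).trans (hr x)
    exact abs_le.2 ⟨le_max_left _ _, max_le (by linarith) (min_le_left _ _)⟩
  · obtain ⟨hlo, hhi⟩ := abs_le.1 (hr x)
    have hfix : clamp (f x) = f x := by simp [clamp, hlo, hhi]
    rw [← hfix]
    exact (hclamp.tendsto _).comp (hF x)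

theorem isBaireOne_tsum {ι : Type*} {g : ι → S → ℝ} {r : ι → ℝ} (hg : ∀ i, IsBaireOne (g i))
    (hgr : ∀ i x, |g i x| ≤ r i) (hr : Summable r) : IsBaireOne fun x => ∑' i, g i x := by
  choose F hFc hFr hF using fun i => (hg i).exists_approx_abs_le (hgr i)
  exact ⟨fun n x => ∑' i, F i n x, fun n => continuous_tsum (fun i => hFc i n) hr (hFr · n),
    fun x => tendsto_tsum_of_dominated_convergence hr (hF · x)
      (Eventually.of_forall fun n i => hFr i n x)⟩

theorem IsBaireOne.completelySeparatedB1 {g : S → ℝ} (hg : IsBaireOne g) {A B : Set S}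
    (hA : ∀ x ∈ A, g x ≤ 0) (hB : ∀ x ∈ B, 1 ≤ g x) : CompletelySeparatedB1 A B :=
  ⟨fun x => projIcc 0 1 zero_le_one (g x),
    (continuous_subtype_val.comp (continuous_projIcc (h := zero_le_one))).comp_isBaireOne hg,
    fun x => (projIcc 0 1 zero_le_one (g x)).2,
    fun x hx => by simp [projIcc_of_le_left _ (hA x hx)],
    fun x hx => by simp [projIcc_of_right_le _ (hB x hx)]⟩

theorem IsBaireOne.completelySeparatedB1_le_ge {φ : S → ℝ} (hφ : IsBaireOne φ) {a b : ℝ}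
    (hab : a < b) : CompletelySeparatedB1 {x | φ x ≤ a} {x | b ≤ φ x} := by
  have hba : 0 < b - a := sub_pos.2 hab
  have hcont : Continuous fun t : ℝ => (t - a) / (b - a) := by fun_prop
  refine (hcont.comp_isBaireOne hφ).completelySeparatedB1 (fun x hx => ?_) (fun x hx => ?_)
  · exact div_nonpos_of_nonpos_of_nonneg (sub_nonpos.2 hx) hba.le
  · rw [Function.comp_apply, le_div_iff₀ hba]
    linarith [show b ≤ φ x from hx]

def PreservesCompletelySeparatedB1 (Y : Set X) : Prop :=
  ∀ A B : Set Y, CompletelySeparatedB1 A B →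
    CompletelySeparatedB1 ((↑) '' A : Set X) ((↑) '' B : Set X)

theorem B1StarEmbedded.preservesCompletelySeparatedB1 {Y : Set X} (hY : B1StarEmbedded Y) :
    PreservesCompletelySeparatedB1 Y := by
  intro A B hAB
  obtain ⟨h, hh, h01, hA, hB⟩ := hAB
  obtain ⟨g, hg, -, hgh⟩ := hY h hh ⟨1, fun y => abs_le.2 ⟨by linarith [(h01 y).1], (h01 y).2⟩⟩
  refine hg.completelySeparatedB1 ?_ ?_
  · rintro _ ⟨y, hy, rfl⟩
    rw [hgh, hA y hy]
  · rintro _ ⟨y, hy, rfl⟩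
    rw [hgh, hB y hy]

variable {Y : Set X}

theorem exists_isBaireOne_approx_of_preservesCompletelySeparatedB1
    (hY : PreservesCompletelySeparatedB1 Y)
    {φ : Y → ℝ} (hφ : IsBaireOne φ) {c : ℝ} (hc : 0 < c) (hφc : ∀ y, |φ y| ≤ 3 * c) :
    ∃ g : X → ℝ, IsBaireOne g ∧ (∀ x, |g x| ≤ c) ∧ ∀ y : Y, |φ y - g y| ≤ 2 * c := by
  obtain ⟨k, hk, hk01, hk0, hk1⟩ :=
    hY _ _ (hφ.completelySeparatedB1_le_ge (show -c < c by linarith))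
  refine ⟨fun x => c * (2 * k x - 1),
    (by fun_prop : Continuous fun t : ℝ => c * (2 * t - 1)).comp_isBaireOne hk,
    fun x => ?_, fun y => ?_⟩
  · obtain ⟨hk0x, hk1x⟩ := hk01 x
    rw [abs_le]
    constructor <;> nlinarith
  · obtain ⟨hφlo, hφhi⟩ := abs_le.1 (hφc y)
    obtain ⟨hk0y, hk1y⟩ := hk01 y
    dsimp only
    rw [abs_le]
    rcases le_or_gt (φ y) (-c) with hA | hA
    · rw [hk0 _ ⟨y, hA, rfl⟩]
      constructor <;> linarith
    rcases le_or_gt c (φ y) with hB | hB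
    · rw [hk1 _ ⟨y, hB, rfl⟩]
      constructor <;> linarith
    constructor <;> nlinarith

theorem exists_hasSum_of_preservesCompletelySeparatedB1
    (hY : PreservesCompletelySeparatedB1 Y)
    {f : Y → ℝ} (hf : IsBaireOne f) {c : ℝ} (hc : 0 < c) (hfc : ∀ y, |f y| ≤ 3 * c) :
    ∃ g : ℕ → X → ℝ, (∀ n, IsBaireOne (g n)) ∧ (∀ n x, |g n x| ≤ c * (2 / 3) ^ n) ∧
      ∀ y : Y, HasSum (fun n => g n y) (f y) := by
  choose! approx happrox using fun (φ : Y → ℝ) (c : ℝ) (hφ : IsBaireOne φ) (hc : 0 < c)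
    (hφc : ∀ y, |φ y| ≤ 3 * c) =>
    exists_isBaireOne_approx_of_preservesCompletelySeparatedB1 hY hφ hc hφc
  set C : ℕ → ℝ := fun n => c * (2 / 3) ^ n
  let ρ : ℕ → Y → ℝ := fun n => Nat.rec f (fun n ρn => ρn - approx ρn (C n) ∘ (↑)) n
  have hρ : ∀ n, IsBaireOne (ρ n) ∧ ∀ y, |ρ n y| ≤ 3 * C n := by
    intro n
    induction n with
    | zero => exact ⟨hf, fun y => (hfc y).trans_eq (by simp [C])⟩
    | succ n ih =>
      obtain ⟨hg, -, hρg⟩ := happrox _ _ ih.1 (by positivity) ih.2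
      refine ⟨ih.1.sub (hg.comp_continuous continuous_subtype_val), fun y => ?_⟩
      exact (hρg y).trans_eq (by simp only [C]; ring)
  have hg : ∀ n, IsBaireOne (approx (ρ n) (C n)) ∧ ∀ x, |approx (ρ n) (C n) x| ≤ C n :=
    fun n => (happrox _ _ (hρ n).1 (by positivity) (hρ n).2).imp_right And.left
  refine ⟨fun n => approx (ρ n) (C n), fun n => (hg n).1, fun n => (hg n).2, fun y => ?_⟩
  have hpartial : ∀ m, ∑ n ∈ Finset.range m, approx (ρ n) (C n) y = f y - ρ m y := by
    intro m
    induction m with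
    | zero => simp [ρ]
    | succ m ih =>
      rw [Finset.sum_range_succ, ih]
      change _ = f y - (ρ m y - approx (ρ m) (C m) y)
      ring
  have hρ0 : Tendsto (fun m => ρ m y) atTop (𝓝 0) := by
    refine squeeze_zero_norm (fun m => (hρ m).2 y) ?_
    simpa [C] using ((tendsto_pow_atTop_nhds_zero_of_lt_one (by norm_num) (by norm_num) :
      Tendsto (fun n : ℕ => (2 / 3 : ℝ) ^ n) atTop (𝓝 0)).const_mul c).const_mul 3
  have hsum : Summable fun n => approx (ρ n) (C n) y :=
    ((summable_geometric_of_lt_one (by norm_num) (by norm_num)).mul_left c).of_norm_bounded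
      fun n => (hg n).2 y
  rw [hsum.hasSum_iff_tendsto_nat]
  simpa [hpartial] using (tendsto_const_nhds (x := f y)).sub hρ0

theorem B1StarEmbedded.of_preservesCompletelySeparatedB1
    (hY : PreservesCompletelySeparatedB1 Y) : B1StarEmbedded Y := by
  rintro f hf ⟨M, hM⟩
  set c := (|M| + 1) / 3 with hc
  obtain ⟨g, hg, hgc, hgf⟩ := exists_hasSum_of_preservesCompletelySeparatedB1 hY hf
    (c := c) (by positivity) fun y => by rw [hc]; linarith [hM y, le_abs_self M]
  have hC : HasSum (fun n : ℕ => c * (2 / 3) ^ n) (c * (1 - 2 / 3)⁻¹) :=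
    (hasSum_geometric_of_lt_one (by norm_num) (by norm_num)).mul_left c
  exact ⟨fun x => ∑' n, g n x, isBaireOne_tsum hg hgc hC.summable,
    ⟨_, fun x => tsum_of_norm_bounded (f := fun n => g n x) hC (hgc · x)⟩, fun y => (hgf y).tsum_eq⟩

end

theorem b1StarEmbedded_iff_completelySeparated {X : Type*} [TopologicalSpace X] (Y : Set X) :
    B1StarEmbedded Y ↔
      ∀ A B : Set Y, CompletelySeparatedB1 A B →
        CompletelySeparatedB1 ((↑) '' A : Set X) ((↑) '' B : Set X) :=
  ⟨B1StarEmbedded.preservesCompletelySeparatedB1,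
    B1StarEmbedded.of_preservesCompletelySeparatedB1⟩
end

section
/- Let X be a topological space and Y ⊆ X a B₁-embedded subset of X. Then for every Baire one function f : X → ℝ whose zero set Z(f) is disjoint from Y, the sets Y and Z(f) are completely separated in X by B₁(X). -/
/-- `Y` is *B₁-embedded* in `X` if every Baire one function on the subspace `Y`
extends to a Baire one function on `X`. -/
def B1Embedded {X : Type*} [TopologicalSpace X] (Y : Set X) : Prop :=
  ∀ f : Y → ℝ, IsBaireOne f → ∃ g : X → ℝ, IsBaireOne g ∧ ∀ y : Y, g y = f y

open Filter Topology

namespace IsBaireOne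

variable {X Y Z : Type*} [TopologicalSpace X] [TopologicalSpace Y] [TopologicalSpace Z]

theorem continuous_comp {g : Y → Z} {f : X → Y} (hg : Continuous g) (hf : IsBaireOne f) :
    IsBaireOne (g ∘ f) := by
  obtain ⟨F, hFc, hFt⟩ := hf
  exact ⟨fun n => g ∘ F n, fun n => hg.comp (hFc n), fun x => (hg.tendsto _).comp (hFt x)⟩

theorem comp_continuous_s18 {f : Y → Z} {φ : X → Y} (hf : IsBaireOne f) (hφ : Continuous φ) :
    IsBaireOne (f ∘ φ) := by
  obtain ⟨F, hFc, hFt⟩ := hf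
  exact ⟨fun n => F n ∘ φ, fun n => (hFc n).comp hφ, fun x => hFt (φ x)⟩

theorem prodMk {f : X → Y} {g : X → Z} (hf : IsBaireOne f) (hg : IsBaireOne g) :
    IsBaireOne fun x => (f x, g x) := by
  obtain ⟨F, hFc, hFt⟩ := hf
  obtain ⟨G, hGc, hGt⟩ := hg
  exact ⟨fun n x => (F n x, G n x), fun n => (hFc n).prodMk (hGc n),
    fun x => (hFt x).prodMk_nhds (hGt x)⟩

theorem mul {M : Type*} [TopologicalSpace M] [Mul M] [ContinuousMul M] {f g : X → M}
    (hf : IsBaireOne f) (hg : IsBaireOne g) : IsBaireOne fun x => f x * g x :=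
  IsBaireOne.continuous_comp continuous_mul (hf.prodMk hg)

/-- The approximants `F n / max (F n ^ 2) (1 / (n + 1))` are continuous because the
denominator is bounded away from `0`, and they tend to `f / f ^ 2` wherever `f ≠ 0`. -/
theorem inv {f : X → ℝ} (hf : IsBaireOne f) (hf0 : ∀ x, f x ≠ 0) :
    IsBaireOne fun x => (f x)⁻¹ := by
  obtain ⟨F, hFc, hFt⟩ := hf
  refine ⟨fun n x => F n x / max (F n x ^ 2) (1 / (n + 1)), fun n => ?_, fun x => ?_⟩
  · refine (hFc n).div (((hFc n).pow 2).max continuous_const) fun x => ?_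
    exact (lt_max_of_lt_right (by positivity)).ne'
  · have hden : Tendsto (fun n : ℕ => max (F n x ^ 2) (1 / (n + 1)))
        atTop (𝓝 (f x ^ 2)) := by
      simpa [sq_nonneg] using ((hFt x).pow 2).max tendsto_one_div_add_atTop_nhds_zero_nat
    have hlim := (hFt x).div hden (pow_ne_zero 2 (hf0 x))
    rw [sq, div_mul_cancel_left₀ (hf0 x)] at hlim
    exact hlim

end IsBaireOne

theorem CompletelySeparatedB1.of_isBaireOne {S : Type*} [TopologicalSpace S] {A B : Set S}
    {p : S → ℝ} (hp : IsBaireOne p) (hA : ∀ x ∈ A, p x = 0) (hB : ∀ x ∈ B, p x = 1) :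
    CompletelySeparatedB1 A B := by
  refine ⟨fun x => max 0 (min (p x) 1), ?_, fun x => ⟨le_max_left _ _, ?_⟩, ?_, ?_⟩
  · exact IsBaireOne.continuous_comp (g := fun t : ℝ => max 0 (min t 1)) (by fun_prop) hp
  · exact max_le zero_le_one (min_le_right _ _)
  · intro x hx
    simp [hA x hx]
  · intro x hx
    simp [hB x hx]

theorem b1Embedded_completelySeparated_from_disjoint_zeroSet
    {X : Type*} [TopologicalSpace X] (Y : Set X) (hY : B1Embedded Y)
    (f : X → ℝ) (hf : IsBaireOne f) (hdisj : {x : X | f x = 0} ∩ Y = ∅) :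
    CompletelySeparatedB1 Y {x : X | f x = 0} := by
  have hfY : ∀ y : Y, f y ≠ 0 := fun y hy => hdisj.subset ⟨hy, y.2⟩
  obtain ⟨g, hg, hgY⟩ := hY _ ((hf.comp_continuous_s18 continuous_subtype_val).inv hfY)
  refine .of_isBaireOne (p := fun x => 1 - f x * g x) ?_ (fun y hy => ?_) (fun x hx => ?_)
  · exact (hf.mul hg).continuous_comp (g := fun t => 1 - t) (by fun_prop)
  · simp [hgY ⟨y, hy⟩, hfY ⟨y, hy⟩]
  · simp [show f x = 0 from hx]
end
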